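/- The set T_G = {φ ∈ S_G : the image of L_φ is dense in G}, where L_φ(x) = φ(x)x, is a submonoid of S_G, and it is left cancellative: if f ∈ T_G and g, h ∈ S_G with f ∗ g = f ∗ h, and g, h are continuous, then g = h. -/
import Mathlib


/-- A groupoid in the sense of Hahn: a set with a partially defined product,
an inverse map, and a composability relation. -/
structure GroupoidStr (G : Type*) where
  mul : G → G → G
  inv : G → G
  comp : G → G → Prop
  inv_inv : ∀ x, inv (inv x) = x
  comp_mul_left : ∀ {x y z}, comp x y → comp y z → comp (mul x y) z
  comp_mul_right : ∀ {x y z}, comp x y → comp y z → comp x (mul y z)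
  mul_assoc : ∀ {x y z}, comp x y → comp y z → mul (mul x y) z = mul x (mul y z)
  comp_inv_left : ∀ x, comp (inv x) x
  comp_inv_right : ∀ x, comp x (inv x)
  inv_mul_cancel : ∀ {x y}, comp x y → mul (inv x) (mul x y) = y
  mul_inv_cancel : ∀ {z x}, comp z x → mul (mul z x) (inv x) = z
  /-- `(x, y)` is composable iff `d x = r y`. -/
  comp_iff : ∀ x y, comp x y ↔ mul (inv x) x = mul y (inv y)

namespace GroupoidStr

variable {G : Type*} (𝔾 : GroupoidStr G)

/-- The range map `r x = x * x⁻¹`. -/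
def r (x : G) : G := 𝔾.mul x (𝔾.inv x)

/-- The domain map `d x = x⁻¹ * x`. -/
def d (x : G) : G := 𝔾.mul (𝔾.inv x) x

/-- The set `S_G` of maps `f : G → G` with `d (f x) = r x`. -/
def SG : Set (G → G) := {f | ∀ x, 𝔾.d (f x) = 𝔾.r x}

/-- The set `S'_G` of maps `h : G → G` with `r (h x) = d x`. -/
def SG' : Set (G → G) := {h | ∀ x, 𝔾.r (h x) = 𝔾.d x}

/-- The operation `(f ∗ g) x = g (f x · x) · f x` on `S_G`. -/
def star (f g : G → G) : G → G := fun x => 𝔾.mul (g (𝔾.mul (f x) x)) (f x)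

/-- The operation `(h ⋆ k) x = h x · k (x · h x)` on `S'_G`. -/
def star' (h k : G → G) : G → G := fun x => 𝔾.mul (h x) (k (𝔾.mul x (h x)))

/-- The map `f ↦ f*`, `f* x = (f x⁻¹)⁻¹`. -/
def dagger (f : G → G) : G → G := fun x => 𝔾.inv (f (𝔾.inv x))

/-- `L_φ x = φ x · x`. -/
def L (φ : G → G) : G → G := fun x => 𝔾.mul (φ x) x

/-- `R_ψ x = x · ψ x`. -/
def R (ψ : G → G) : G → G := fun x => 𝔾.mul x (ψ x)

end GroupoidStr

namespace GroupoidStr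

variable {G : Type*} (𝔾 : GroupoidStr G)

lemma comp_of_eq {x y : G} (h : 𝔾.d x = 𝔾.r y) : 𝔾.comp x y := (𝔾.comp_iff x y).2 h

lemma d_eq_r {x y : G} (h : 𝔾.comp x y) : 𝔾.d x = 𝔾.r y := (𝔾.comp_iff x y).1 h

lemma r_inv' (x : G) : 𝔾.r (𝔾.inv x) = 𝔾.d x := by unfold r d; rw [𝔾.inv_inv]

lemma d_inv' (x : G) : 𝔾.d (𝔾.inv x) = 𝔾.r x := by unfold r d; rw [𝔾.inv_inv]

lemma comp_r_self (x : G) : 𝔾.comp (𝔾.r x) x :=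
  𝔾.comp_mul_left (𝔾.comp_inv_right x) (𝔾.comp_inv_left x)

lemma r_mul' {x y : G} (h : 𝔾.comp x y) : 𝔾.r (𝔾.mul x y) = 𝔾.r x := by
  have h1 : 𝔾.comp (𝔾.inv x) (𝔾.mul x y) :=
    𝔾.comp_mul_right (𝔾.comp_inv_left x) h
  have := 𝔾.d_eq_r h1
  rw [𝔾.d_inv'] at this
  exact this.symm

lemma d_mul' {x y : G} (h : 𝔾.comp x y) : 𝔾.d (𝔾.mul x y) = 𝔾.d y := by
  have h1 : 𝔾.comp (𝔾.mul x y) (𝔾.inv y) :=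
    𝔾.comp_mul_left h (𝔾.comp_inv_right y)
  have := 𝔾.d_eq_r h1
  rwa [𝔾.r_inv'] at this

lemma L_r_eq_id : 𝔾.L 𝔾.r = id := by
  funext x
  show 𝔾.mul (𝔾.mul x (𝔾.inv x)) x = x
  rw [𝔾.mul_assoc (𝔾.comp_inv_right x) (𝔾.comp_inv_left x)]
  have := 𝔾.inv_mul_cancel (𝔾.comp_inv_left x)
  rwa [𝔾.inv_inv] at this

lemma comp_apply_self {f : G → G} (hf : f ∈ 𝔾.SG) (x : G) : 𝔾.comp (f x) x :=
  𝔾.comp_of_eq (hf x)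

lemma L_star_eq {f g : G → G} (hf : f ∈ 𝔾.SG) (hg : g ∈ 𝔾.SG) :
    𝔾.L (𝔾.star f g) = 𝔾.L g ∘ 𝔾.L f := by
  funext x
  have hbx : 𝔾.comp (f x) x := 𝔾.comp_apply_self hf x
  have hab : 𝔾.comp (g (𝔾.mul (f x) x)) (f x) := by
    apply 𝔾.comp_of_eq
    rw [hg (𝔾.mul (f x) x), 𝔾.r_mul' hbx]
  show 𝔾.mul (𝔾.mul (g (𝔾.mul (f x) x)) (f x)) x
      = 𝔾.mul (g (𝔾.mul (f x) x)) (𝔾.mul (f x) x)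
  exact 𝔾.mul_assoc hab hbx

lemma cont_mul₂ [TopologicalSpace G]
    (hmul : ContinuousOn (fun p : G × G => 𝔾.mul p.1 p.2) {p | 𝔾.comp p.1 p.2})
    {f g : G → G} (hf : Continuous f) (hg : Continuous g)
    (hc : ∀ x, 𝔾.comp (f x) (g x)) : Continuous fun x => 𝔾.mul (f x) (g x) :=
  hmul.comp_continuous (hf.prodMk hg) hc

lemma cont_L [TopologicalSpace G]
    (hmul : ContinuousOn (fun p : G × G => 𝔾.mul p.1 p.2) {p | 𝔾.comp p.1 p.2})
    {g : G → G} (hgS : g ∈ 𝔾.SG) (hg : Continuous g) : Continuous (𝔾.L g) :=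
  𝔾.cont_mul₂ hmul hg continuous_id (𝔾.comp_apply_self hgS)

end GroupoidStr

open GroupoidStr

theorem stmt17 {G : Type*} [TopologicalSpace G] [T2Space G] (𝔾 : GroupoidStr G)
    (hmul : ContinuousOn (fun p : G × G => 𝔾.mul p.1 p.2) {p | 𝔾.comp p.1 p.2})
    (hinv : Continuous 𝔾.inv) :
    𝔾.r ∈ {φ ∈ 𝔾.SG | Continuous φ ∧ Dense (Set.range (𝔾.L φ))} ∧
    (∀ f ∈ {φ ∈ 𝔾.SG | Continuous φ ∧ Dense (Set.range (𝔾.L φ))},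
     ∀ g ∈ {φ ∈ 𝔾.SG | Continuous φ ∧ Dense (Set.range (𝔾.L φ))},
      𝔾.star f g ∈ {φ ∈ 𝔾.SG | Continuous φ ∧ Dense (Set.range (𝔾.L φ))}) ∧
    (∀ f ∈ {φ ∈ 𝔾.SG | Continuous φ ∧ Dense (Set.range (𝔾.L φ))},
     ∀ g ∈ 𝔾.SG, ∀ h ∈ 𝔾.SG, Continuous g → Continuous h →
      𝔾.star f g = 𝔾.star f h → g = h) := by
  have Tdef : {φ ∈ 𝔾.SG | Continuous φ ∧ Dense (Set.range (𝔾.L φ))}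
      = {φ | φ ∈ 𝔾.SG ∧ Continuous φ ∧ Dense (Set.range (𝔾.L φ))} := rfl
  refine ⟨⟨fun x => 𝔾.d_eq_r (𝔾.comp_r_self x), ?_, ?_⟩, ?_, ?_⟩
  · exact 𝔾.cont_mul₂ hmul continuous_id hinv 𝔾.comp_inv_right
  · rw [𝔾.L_r_eq_id, Set.range_id]
    exact dense_univ
  · rintro f ⟨hfS, hfc, hfd⟩ g ⟨hgS, hgc, hgd⟩
    have hLf : ∀ x, 𝔾.comp (f x) x := 𝔾.comp_apply_self hfS
    have hcomp : ∀ x, 𝔾.comp (g (𝔾.mul (f x) x)) (f x) := fun x => by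
      apply 𝔾.comp_of_eq
      rw [hgS (𝔾.mul (f x) x), 𝔾.r_mul' (hLf x)]
    refine ⟨fun x => ?_, ?_, ?_⟩
    · show 𝔾.d (𝔾.mul (g (𝔾.mul (f x) x)) (f x)) = 𝔾.r x
      rw [𝔾.d_mul' (hcomp x)]
      exact hfS x
    · exact 𝔾.cont_mul₂ hmul
        (hgc.comp (𝔾.cont_mul₂ hmul hfc continuous_id hLf)) hfc hcomp
    · rw [𝔾.L_star_eq hfS hgS]
      exact (DenseRange.comp hgd hfd (𝔾.cont_L hmul hgS hgc) :
        DenseRange (𝔾.L g ∘ 𝔾.L f))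
  · rintro f ⟨hfS, hfc, hfd⟩ g hgS h hhS hgc hhc hfgh
    have hLeq : 𝔾.L g ∘ 𝔾.L f = 𝔾.L h ∘ 𝔾.L f := by
      rw [← 𝔾.L_star_eq hfS hgS, ← 𝔾.L_star_eq hfS hhS, hfgh]
    have hLgh : 𝔾.L g = 𝔾.L h := by
      refine Continuous.ext_on hfd (𝔾.cont_L hmul hgS hgc) (𝔾.cont_L hmul hhS hhc) ?_
      rintro y ⟨x, rfl⟩
      exact congrFun hLeq x
    funext x
    have h1 := 𝔾.mul_inv_cancel (𝔾.comp_apply_self hgS x)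
    have h2 := 𝔾.mul_inv_cancel (𝔾.comp_apply_self hhS x)
    rw [← h1, ← h2]
    show 𝔾.mul (𝔾.L g x) (𝔾.inv x) = 𝔾.mul (𝔾.L h x) (𝔾.inv x)
    rw [hLgh]
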